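/- For a < b, Σ > 0, and μ ∉ [a, b], the function Σ ↦ erf((μ-a)/√(2Σ)) - erf((μ-b)/√(2Σ)) has non-negative derivative in Σ if and only if Σ ≤ ((μ-a)² - (μ-b)²)/(2 log((μ-a)/(μ-b))). -/

import Mathlib

open Real

/-- The Gauss error function `erf x = (2/√π) ∫₀ˣ e^{-t²} dt`. -/
noncomputable def erf (x : ℝ) : ℝ := (2 / Real.sqrt Real.pi) * ∫ t in (0:ℝ)..x, Real.exp (-t ^ 2)

lemma erf_hasDerivAt (x : ℝ) :
    HasDerivAt erf (2 / Real.sqrt Real.pi * Real.exp (-x ^ 2)) x := by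
  have hc : Continuous fun t : ℝ => Real.exp (-t ^ 2) := by continuity
  have h1 := (hc.integral_hasStrictDerivAt 0 x).hasDerivAt
  rw [show erf = fun y => 2 / Real.sqrt Real.pi * ∫ t in (0:ℝ)..y, Real.exp (-t ^ 2) from rfl]
  simpa [mul_comm] using h1.const_mul (2 / Real.sqrt Real.pi)

lemma key (c V : ℝ) (hV : 0 < V) :
    HasDerivAt (fun s : ℝ => erf (c / Real.sqrt (2 * s)))
      (-(2 / Real.sqrt Real.pi / (2 * V * Real.sqrt (2 * V))) *
        (c * Real.exp (-(c ^ 2 / (2 * V))))) V := by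
  have h2V : (0:ℝ) < 2 * V := by linarith
  have hr : (0:ℝ) < Real.sqrt (2 * V) := Real.sqrt_pos.mpr h2V
  have hs : HasDerivAt (fun s : ℝ => Real.sqrt (2 * s)) (1 / Real.sqrt (2 * V)) V := by
    have h := (Real.hasDerivAt_sqrt (ne_of_gt h2V)).comp V
      ((hasDerivAt_id V).const_mul 2)
    refine h.congr_deriv ?_
    field_simp
  have hinv : HasDerivAt (fun s : ℝ => c / Real.sqrt (2 * s))
      (c * (-(1 / Real.sqrt (2 * V)) / (Real.sqrt (2 * V)) ^ 2)) V := by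
    simpa [div_eq_mul_inv] using (hs.inv (ne_of_gt hr)).const_mul c
  have := (erf_hasDerivAt (c / Real.sqrt (2 * V))).comp V hinv
  refine this.congr_deriv ?_
  have hsq : (Real.sqrt (2 * V)) ^ 2 = 2 * V := Real.sq_sqrt (le_of_lt h2V)
  rw [div_pow, hsq]
  field_simp

lemma logiff (x y V : ℝ) (hx : 0 < x) (hy : 0 < y) (hV : 0 < V) :
    x * Real.exp (-(x ^ 2 / (2 * V))) ≤ y * Real.exp (-(y ^ 2 / (2 * V))) ↔
      (Real.log x - Real.log y) * (2 * V) ≤ x ^ 2 - y ^ 2 := by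
  have h2V : (0:ℝ) < 2 * V := by linarith
  have hpx : 0 < x * Real.exp (-(x ^ 2 / (2 * V))) := by positivity
  have hpy : 0 < y * Real.exp (-(y ^ 2 / (2 * V))) := by positivity
  rw [← Real.log_le_log_iff hpx hpy,
    Real.log_mul (ne_of_gt hx) (ne_of_gt (Real.exp_pos _)),
    Real.log_mul (ne_of_gt hy) (ne_of_gt (Real.exp_pos _)),
    Real.log_exp, Real.log_exp]
  have e1 : x ^ 2 / (2 * V) * (2 * V) = x ^ 2 := by field_simp
  have e2 : y ^ 2 / (2 * V) * (2 * V) = y ^ 2 := by field_simp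
  constructor <;> intro h
  · nlinarith [mul_le_mul_of_nonneg_right h h2V.le]
  · nlinarith [h, e1, e2, h2V]


/-- For a < b, Σ > 0, and μ ∉ [a,b], the derivative in Σ of
Σ ↦ erf((μ-a)/√(2Σ)) − erf((μ-b)/√(2Σ)) is non-negative iff
Σ ≤ ((μ-a)² − (μ-b)²)/(2 log((μ-a)/(μ-b))). -/
theorem stmt3 (a b V μ : ℝ) (hab : a < b) (hV : 0 < V)
    (hμ : μ ∉ Set.Icc a b) :
    0 ≤ deriv (fun s : ℝ =>
        erf ((μ - a) / Real.sqrt (2 * s)) - erf ((μ - b) / Real.sqrt (2 * s))) V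
      ↔ V ≤ ((μ - a) ^ 2 - (μ - b) ^ 2) / (2 * Real.log ((μ - a) / (μ - b))) := by
  have h2V : (0:ℝ) < 2 * V := by linarith
  set A := μ - a with hA
  set B := μ - b with hB
  have hD := HasDerivAt.deriv (f := fun s : ℝ => erf (A / Real.sqrt (2 * s)) - erf (B / Real.sqrt (2 * s))) ((key A V hV).sub (key B V hV))
  rw [hD]
  have hP : 0 < 2 / Real.sqrt Real.pi / (2 * V * Real.sqrt (2 * V)) := by
    have := Real.pi_pos
    positivity
  rw [show -(2 / Real.sqrt Real.pi / (2 * V * Real.sqrt (2 * V))) *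
        (A * Real.exp (-(A ^ 2 / (2 * V)))) -
      -(2 / Real.sqrt Real.pi / (2 * V * Real.sqrt (2 * V))) *
        (B * Real.exp (-(B ^ 2 / (2 * V)))) =
      2 / Real.sqrt Real.pi / (2 * V * Real.sqrt (2 * V)) *
        (B * Real.exp (-(B ^ 2 / (2 * V))) - A * Real.exp (-(A ^ 2 / (2 * V)))) from by ring,
    mul_nonneg_iff_of_pos_left hP, sub_nonneg]
  simp only [Set.mem_Icc, not_and, not_le] at hμ
  rcases lt_or_ge μ a with hμa | hμa
  · -- μ < a : A < 0, B < A < 0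
    have hA0 : A < 0 := by simp [hA]; linarith
    have hB0 : B < 0 := by simp [hB]; linarith
    have hBA : B < A := by simp [hA, hB]; linarith
    have hAne : A ≠ 0 := ne_of_lt hA0
    have hBne : B ≠ 0 := ne_of_lt hB0
    rw [Real.log_div hAne hBne, ← Real.log_neg_eq_log A, ← Real.log_neg_eq_log B]
    have hL : Real.log (-A) < Real.log (-B) :=
      Real.log_lt_log (by linarith) (by linarith)
    rw [le_div_iff_of_neg (by linarith : 2 * (Real.log (-A) - Real.log (-B)) < 0)]
    have h1 : A * Real.exp (-(A ^ 2 / (2 * V))) ≤ B * Real.exp (-(B ^ 2 / (2 * V))) ↔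
        (-B) * Real.exp (-((-B) ^ 2 / (2 * V))) ≤ (-A) * Real.exp (-((-A) ^ 2 / (2 * V))) := by
      rw [show ((-B : ℝ)) ^ 2 = B ^ 2 from by ring, show ((-A : ℝ)) ^ 2 = A ^ 2 from by ring]
      constructor <;> intro h <;> linarith
    rw [h1, logiff (-B) (-A) V (by linarith) (by linarith) hV]
    constructor <;> intro h <;> nlinarith [h]
  · -- b < μ : 0 < B < A
    have hbμ : b < μ := hμ hμa
    have hB0 : 0 < B := by simp [hB]; linarith
    have hBA : B < A := by simp [hA, hB]; linarith
    have hA0 : 0 < A := by linarith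
    have hAne : A ≠ 0 := ne_of_gt hA0
    have hBne : B ≠ 0 := ne_of_gt hB0
    rw [Real.log_div hAne hBne]
    have hL : Real.log B < Real.log A := Real.log_lt_log hB0 hBA
    rw [le_div_iff₀ (by linarith : 0 < 2 * (Real.log A - Real.log B)),
      logiff A B V hA0 hB0 hV]
    constructor <;> intro h <;> nlinarith [h]
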